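/- arXiv:math/0405069 — 4 statements merged into one kernel-verified Lean document; each statement's English description precedes it below -/
import Mathlib

section
/- Let K be a field complete with respect to a nonarchimedean absolute value. For a Laurent series x = Σ_J c_J t^J in n variables convergent on the polyannulus with radii in an aligned interval I, and for tuples A = (a_1,...,a_n), B = (b_1,...,b_n) in I^n and c ∈ [0,1], setting r_i = a_i^c · b_i^(1-c), one has |x|_R ≤ |x|_A^c · |x|_B^(1-c), where |x|_R = sup_J |c_J| r_1^{j_1}···r_n^{j_n}. -/
/-! The Gauss norm is a supremum of monomial terms `‖c_J‖ ∏ r_i^{j_i}`, and each term is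
log-affine in the radii: at the geometric mean `a^t b^(1-t)` of two radius vectors it equals
the geometric mean of its values at `a` and `b`. Bounding each factor by the corresponding
Gauss norm and taking the supremum gives the inequality. -/

open Filter Topology

/-- The Gauss norm `|x|_R = sup_J ‖c_J‖ · R_1^{j_1} ⋯ R_n^{j_n}` of a Laurent series
`x = Σ_J c_J t^J` in `n` variables, valued in `ℝ≥0∞`. -/
noncomputable def gaussNorm {K : Type*} [NormedField K] {n : ℕ}
    (c : (Fin n → ℤ) → K) (R : Fin n → ENNReal) : ENNReal :=
  ⨆ J : Fin n → ℤ, (‖c J‖₊ : ENNReal) * ∏ i : Fin n, R i ^ (J i)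

open ENNReal

namespace ENNReal

theorem rpow_mul_rpow_one_sub (x : ℝ≥0∞) {t : ℝ} (ht0 : 0 ≤ t) (ht1 : t ≤ 1) :
    x ^ t * x ^ (1 - t) = x := by
  rw [← rpow_add_of_nonneg _ _ ht0 (sub_nonneg.2 ht1), add_sub_cancel, rpow_one]

theorem rpow_mul_rpow_zpow {a b : ℝ≥0∞} (ha : a ≠ ⊤) (hb : b ≠ ⊤) {t u : ℝ}
    (ht : 0 ≤ t) (hu : 0 ≤ u) (k : ℤ) :
    (a ^ t * b ^ u) ^ k = (a ^ k) ^ t * (b ^ k) ^ u := by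
  rw [← rpow_intCast, mul_rpow_of_ne_top (rpow_ne_top_of_nonneg ht ha)
      (rpow_ne_top_of_nonneg hu hb), ← rpow_mul, ← rpow_mul, mul_comm t, mul_comm u,
    rpow_intCast_mul, rpow_intCast_mul]

theorem mul_prod_rpow_mul_rpow_zpow {ι : Type*} (x : ℝ≥0∞) {s : Finset ι}
    {a b : ι → ℝ≥0∞} (ha : ∀ i ∈ s, a i ≠ ⊤) (hb : ∀ i ∈ s, b i ≠ ⊤) (k : ι → ℤ)
    {t : ℝ} (ht0 : 0 ≤ t) (ht1 : t ≤ 1) :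
    x * ∏ i ∈ s, (a i ^ t * b i ^ (1 - t)) ^ k i =
      (x * ∏ i ∈ s, a i ^ k i) ^ t * (x * ∏ i ∈ s, b i ^ k i) ^ (1 - t) := by
  have hu : 0 ≤ 1 - t := sub_nonneg.2 ht1
  calc x * ∏ i ∈ s, (a i ^ t * b i ^ (1 - t)) ^ k i
      = (x ^ t * x ^ (1 - t)) * ∏ i ∈ s, ((a i ^ k i) ^ t * (b i ^ k i) ^ (1 - t)) := by
        rw [rpow_mul_rpow_one_sub x ht0 ht1]
        exact congrArg _ <| Finset.prod_congr rfl fun i hi ↦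
          rpow_mul_rpow_zpow (ha i hi) (hb i hi) ht0 hu (k i)
    _ = (x * ∏ i ∈ s, a i ^ k i) ^ t * (x * ∏ i ∈ s, b i ^ k i) ^ (1 - t) := by
        rw [Finset.prod_mul_distrib, prod_rpow_of_nonneg ht0, prod_rpow_of_nonneg hu,
          mul_rpow_of_nonneg _ _ ht0, mul_rpow_of_nonneg _ _ hu, mul_mul_mul_comm]

theorem ofReal_rpow_mul_rpow {a b t u : ℝ} (ha : 0 ≤ a) (hb : 0 ≤ b) (ht : 0 ≤ t)
    (hu : 0 ≤ u) :
    ENNReal.ofReal (a ^ t * b ^ u) = ENNReal.ofReal a ^ t * ENNReal.ofReal b ^ u := by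
  rw [ofReal_mul (Real.rpow_nonneg ha t), ofReal_rpow_of_nonneg ha ht,
    ofReal_rpow_of_nonneg hb hu]

end ENNReal

section GaussNorm

variable {K : Type*} [NormedField K] {n : ℕ}

theorem le_gaussNorm (c : (Fin n → ℤ) → K) (R : Fin n → ℝ≥0∞) (J : Fin n → ℤ) :
    (‖c J‖₊ : ℝ≥0∞) * ∏ i, R i ^ J i ≤ gaussNorm c R :=
  le_iSup (fun J ↦ (‖c J‖₊ : ℝ≥0∞) * ∏ i, R i ^ J i) J

theorem gaussNorm_rpow_mul_rpow_le (c : (Fin n → ℤ) → K) {a b : Fin n → ℝ≥0∞}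
    (ha : ∀ i, a i ≠ ⊤) (hb : ∀ i, b i ≠ ⊤) {t : ℝ} (ht0 : 0 ≤ t) (ht1 : t ≤ 1) :
    gaussNorm c (fun i ↦ a i ^ t * b i ^ (1 - t)) ≤
      gaussNorm c a ^ t * gaussNorm c b ^ (1 - t) :=
  iSup_le fun J ↦ by
    rw [mul_prod_rpow_mul_rpow_zpow _ (fun i _ ↦ ha i) (fun i _ ↦ hb i) J ht0 ht1]
    gcongr
    · exact le_gaussNorm c a J
    · exact le_gaussNorm c b J

end GaussNorm

theorem hadamard_three_circles_general
    {K : Type*} [NormedField K]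
    {n : ℕ} (I : Set ℝ) (hI : I ⊆ Set.Ici (0 : ℝ))
    (c : (Fin n → ℤ) → K)
    (A B : Fin n → ℝ) (hA : ∀ i, A i ∈ I) (hB : ∀ i, B i ∈ I)
    (t : ℝ) (ht : t ∈ Set.Icc (0 : ℝ) 1)
    (R : Fin n → ℝ) (hR : ∀ i, R i = A i ^ t * B i ^ (1 - t)) :
    gaussNorm c (fun i => ENNReal.ofReal (R i)) ≤
      gaussNorm c (fun i => ENNReal.ofReal (A i)) ^ t *
      gaussNorm c (fun i => ENNReal.ofReal (B i)) ^ (1 - t) := by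
  obtain ⟨ht0, ht1⟩ := ht
  have hR' : (fun i ↦ ENNReal.ofReal (R i)) =
      fun i ↦ ENNReal.ofReal (A i) ^ t * ENNReal.ofReal (B i) ^ (1 - t) := funext fun i ↦ by
    rw [hR i, ofReal_rpow_mul_rpow (hI (hA i)) (hI (hB i)) ht0 (sub_nonneg.2 ht1)]
  rw [hR']
  exact gaussNorm_rpow_mul_rpow_le c (fun _ ↦ ofReal_ne_top) (fun _ ↦ ofReal_ne_top) ht0 ht1

/-- Nonarchimedean Hadamard three circles: for a Laurent series convergent on the
polyannulus with radii in an aligned interval `I`, tuples `A, B ∈ Iⁿ`, `t ∈ [0,1]`,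
and `R_i = A_i^t · B_i^(1-t)`, one has `|x|_R ≤ |x|_A^t · |x|_B^(1-t)`. -/
theorem hadamard_three_circles
    {K : Type*} [NormedField K]
    (hna : ∀ x y : K, ‖x + y‖ ≤ max ‖x‖ ‖y‖)
    {n : ℕ} (I : Set ℝ) (hI : I ⊆ Set.Ici (0 : ℝ))
    (c : (Fin n → ℤ) → K)
    (hconv : ∀ ρ : Fin n → ℝ, (∀ i, ρ i ∈ I) →
      Tendsto (fun J : Fin n → ℤ => ‖c J‖ * ∏ i : Fin n, ρ i ^ (J i))
        cofinite (nhds 0))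
    (hsupp : (0 : ℝ) ∈ I → ∀ J : Fin n → ℤ, (∃ i, J i < 0) → c J = 0)
    (A B : Fin n → ℝ) (hA : ∀ i, A i ∈ I) (hB : ∀ i, B i ∈ I)
    (t : ℝ) (ht : t ∈ Set.Icc (0 : ℝ) 1)
    (R : Fin n → ℝ) (hR : ∀ i, R i = A i ^ t * B i ^ (1 - t)) :
    gaussNorm c (fun i => ENNReal.ofReal (R i)) ≤
      gaussNorm c (fun i => ENNReal.ofReal (A i)) ^ t *
      gaussNorm c (fun i => ENNReal.ofReal (B i)) ^ (1 - t) :=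
  hadamard_three_circles_general I hI c A B hA hB t ht R hR
end

section
/- Let A be an integral domain, let t_1, ..., t_n ∈ A (n ≥ 2) be such that dt_1, ..., dt_n freely generate the module of Kähler differentials Ω^1_{A/B} over a subring B, and set A' = A[t_1/t_2, t_2/t_1] (inside the fraction field of A). Then Ω^1_{A'/B} is freely generated by d(t_1/t_2), dt_2, ..., dt_n. -/
/-!
Since `K` is a localization of `A`, the base change `K ⊗_A Ω¹_{A/B} ≅ Ω¹_{K/B}` turns the
`dt_i` into a `K`-basis of `Ω¹_{K/B}`. There `t_2 · d(t_1/t_2) = dt_1 - (t_1/t_2) dt_2`, so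
replacing `dt_1` by `d(t_1/t_2)` keeps the family `K`-linearly independent, and pulling back
along `Ω¹_{A'/B} → Ω¹_{K/B}` gives linear independence over `A'`. The family spans
`Ω¹_{A'/B}` because `A'` is generated by `A`, `u = t_1/t_2` and `u⁻¹`: the differentials of
`A` lie in the span of the `dt_i`, `dt_1 = u dt_2 + t_2 du` and `d(u⁻¹) = -u⁻² du`.
-/

open KaehlerDifferential Submodule

theorem Subalgebra.adjoin_eq_top_of_adjoin_image_val {R A : Type*} [CommSemiring R] [Semiring A]
    [Algebra R A] {S : Subalgebra R A} {s : Set S}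
    (h : Algebra.adjoin R (Subtype.val '' s) = S) : Algebra.adjoin R s = ⊤ :=
  Subalgebra.map_injective (f := S.val) Subtype.val_injective <| by
    rw [AlgHom.map_adjoin, Algebra.map_top, Subalgebra.range_val]
    exact h

namespace KaehlerDifferential

variable {R S T ι : Type*} [CommRing R] [CommRing S] [CommRing T] [Algebra R S] [Algebra R T]

theorem span_D_image_eq_top_of_adjoin_eq_top {s : Set S} (hs : Algebra.adjoin R s = ⊤) :
    span S (D R S '' s) = ⊤ := by
  rw [eq_top_iff, ← span_range_derivation, span_le]
  rintro _ ⟨x, rfl⟩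
  induction (hs ▸ Algebra.mem_top : x ∈ Algebra.adjoin R s) using Algebra.adjoin_induction with
  | mem x hx => exact subset_span ⟨x, hx, rfl⟩
  | algebraMap r => simp
  | add x y _ _ hx hy => rw [map_add]; exact add_mem hx hy
  | mul x y _ _ hx hy =>
    rw [Derivation.leibniz]; exact add_mem (smul_mem _ _ hy) (smul_mem _ _ hx)

section Tower

variable [Algebra S T] [IsScalarTower R S T]

theorem D_algebraMap_mem_span_of_span_eq_top {t : ι → S}
    (ht : span S (Set.range fun k ↦ D R S (t k)) = ⊤) (x : S) :
    D R T (algebraMap S T x) ∈ span T (Set.range fun k ↦ D R T (algebraMap S T (t k))) := by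
  have hx : D R S x ∈ span S (Set.range fun k ↦ D R S (t k)) := ht ▸ mem_top
  rw [← map_D R R S T]
  refine span_le_restrictScalars S T _ ?_
  simpa [map_span, ← Set.range_comp, Function.comp_def] using mem_map_of_mem (f := map R R S T) hx

theorem linearIndependent_D_of_linearIndependent_D_algebraMap [FaithfulSMul S T] {w : ι → S}
    (hw : LinearIndependent T fun k ↦ D R T (algebraMap S T (w k))) :
    LinearIndependent S fun k ↦ D R S (w k) := by
  refine LinearIndependent.of_comp (map R R S T) ?_
  simpa only [Function.comp_def, map_D] using hw.restrict_scalars' S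

theorem linearIndependent_map_basis_of_isLocalization (M : Submonoid S) [IsLocalization M T]
    (e : Module.Basis ι S Ω[S⁄R]) : LinearIndependent T fun k ↦ map R R S T (e k) := by
  have := Algebra.FormallyEtale.of_isLocalization (Rₘ := T) M
  convert ((isBaseChange_of_formallyEtale R S T).basis e).linearIndependent with k
  exact (IsBaseChange.basis_apply ..).symm

end Tower

theorem linearIndependent_update_D_div {K : Type*} [Field K] [Algebra R K] [DecidableEq ι]
    {τ : ι → K} (hτ : LinearIndependent K fun k ↦ D R K (τ k)) {i j : ι} (hij : i ≠ j)
    (hj : τ j ≠ 0) :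
    LinearIndependent K (Function.update (fun k ↦ D R K (τ k)) i (D R K (τ i / τ j))) := by
  refine hτ.update i _ ⟨τ j, mem_nonZeroDivisors_of_ne_zero hj,
    Finsupp.single i 1 - Finsupp.single j (τ i / τ j), ?_, ?_⟩
  · simp [Finsupp.single_eq_of_ne hij]
  · have h := (D R K).leibniz (τ i / τ j) (τ j)
    rw [div_mul_cancel₀ _ hj] at h
    simp [Finsupp.linearCombination_single, h]

theorem span_range_update_D_eq_top {A : Type*} [CommRing A] [Algebra R A] [DecidableEq ι]
    (φ : A →ₐ[R] S) {t : ι → A} (ht : span A (Set.range fun k ↦ D R A (t k)) = ⊤) {i j : ι}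
    (hij : i ≠ j) {u v : S} (huv : u * v = 1) (hu : u * φ (t j) = φ (t i))
    (hgen : Algebra.adjoin R (Set.range φ ∪ {u, v}) = ⊤) :
    span S (Set.range (Function.update (fun k ↦ D R S (φ (t k))) i (D R S u))) = ⊤ := by
  set N := span S (Set.range (Function.update (fun k ↦ D R S (φ (t k))) i (D R S u)))
  have hDu : D R S u ∈ N := subset_span ⟨i, Function.update_self ..⟩
  have hDt : ∀ k, D R S (φ (t k)) ∈ N := by
    intro k
    by_cases hk : k = i
    · subst hk
      rw [← hu, Derivation.leibniz]
      exact add_mem (smul_mem _ _ (subset_span ⟨j, Function.update_of_ne hij.symm ..⟩))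
        (smul_mem _ _ hDu)
    · exact subset_span ⟨k, Function.update_of_ne hk ..⟩
  have hDφ : ∀ a, D R S (φ a) ∈ N := by
    let := φ.toAlgebra
    have : IsScalarTower R A S := .of_algebraMap_eq fun r ↦ (φ.commutes r).symm
    intro a
    refine span_le.mpr ?_ (D_algebraMap_mem_span_of_span_eq_top ht a)
    rintro _ ⟨k, rfl⟩
    exact hDt k
  rw [eq_top_iff, ← span_D_image_eq_top_of_adjoin_eq_top hgen, span_le]
  rintro _ ⟨x, ⟨a, rfl⟩ | rfl | hx, rfl⟩
  · exact hDφ a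
  · exact hDu
  · rw [Set.mem_singleton_iff.mp hx, (D R S).leibniz_of_mul_eq_one (mul_comm u v ▸ huv)]
    exact smul_mem _ _ hDu

end KaehlerDifferential

theorem linearIndependent_D_update_div_of_isLocalization {B A K A' ι : Type*}
    [CommRing B] [CommRing A] [Field K] [CommRing A'] [Algebra B A] [Algebra B K] [Algebra A K]
    [IsScalarTower B A K] [Algebra B A'] [Algebra A' K] [IsScalarTower B A' K] [FaithfulSMul A' K]
    (M : Submonoid A) [IsLocalization M K] [DecidableEq ι] {t : ι → A}
    (e : Module.Basis ι A Ω[A⁄B]) (he : ∀ k, e k = D B A (t k)) {i j : ι} (hij : i ≠ j)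
    (hj : algebraMap A K (t j) ≠ 0) {w : ι → A'}
    (hw : ∀ k, algebraMap A' K (w k) = Function.update (fun k ↦ algebraMap A K (t k)) i
      (algebraMap A K (t i) / algebraMap A K (t j)) k) :
    LinearIndependent A' fun k ↦ D B A' (w k) := by
  refine linearIndependent_D_of_linearIndependent_D_algebraMap (T := K) ?_
  have hτ : LinearIndependent K fun k ↦ D B K (algebraMap A K (t k)) := by
    have := linearIndependent_map_basis_of_isLocalization (R := B) (T := K) M e
    simpa only [he, map_D] using this
  have hDw : (fun k ↦ D B K (algebraMap A' K (w k))) =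
      Function.update (fun k ↦ D B K (algebraMap A K (t k))) i
        (D B K (algebraMap A K (t i) / algebraMap A K (t j))) :=
    funext fun k ↦ by rw [hw, Function.apply_update (fun _ ↦ D B K)]
  exact hDw ▸ linearIndependent_update_D_div hτ hij hj

/-- The paper's `t_1, t_2` are `t 0, t 1` here. -/
theorem kaehler_differentials_of_blowup_chart_general
    {B A : Type*} [CommRing B] [CommRing A] [IsDomain A] [Algebra B A]
    {n : ℕ} (t : Fin (n + 2) → A)
    (e : Module.Basis (Fin (n + 2)) A (KaehlerDifferential B A))
    (he : ∀ i, e i = KaehlerDifferential.D B A (t i))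
    (K : Type*) [Field K] [Algebra A K] [IsFractionRing A K]
    [Algebra B K] [IsScalarTower B A K]
    (A' : Subalgebra B K)
    (hA' : A' = Algebra.adjoin B (Set.range (algebraMap A K) ∪
      {algebraMap A K (t 0) / algebraMap A K (t 1),
       algebraMap A K (t 1) / algebraMap A K (t 0)}))
    (hu : algebraMap A K (t 0) / algebraMap A K (t 1) ∈ A')
    (ht : ∀ i : Fin (n + 2), algebraMap A K (t i) ∈ A') :
    ∃ b : Module.Basis (Fin (n + 2)) A' (KaehlerDifferential B A'),
      b 0 = KaehlerDifferential.D B A'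
        (⟨algebraMap A K (t 0) / algebraMap A K (t 1), hu⟩ : A') ∧
      ∀ i : Fin (n + 2), i ≠ 0 →
        b i = KaehlerDifferential.D B A' (⟨algebraMap A K (t i), ht i⟩ : A') := by
  classical
  let τ : Fin (n + 2) → K := fun k ↦ algebraMap A K (t k)
  have hτ : ∀ k, τ k ≠ 0 := fun k ↦ (map_ne_zero_iff _ (IsFractionRing.injective A K)).mpr
    fun h ↦ e.ne_zero k (by rw [he, h, map_zero])
  have hmem : ∀ x ∈ Set.range (algebraMap A K) ∪ {τ 0 / τ 1, τ 1 / τ 0}, x ∈ A' :=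
    fun x hx ↦ hA' ▸ Algebra.subset_adjoin hx
  let φ : A →ₐ[B] A' :=
    (IsScalarTower.toAlgHom B A K).codRestrict A' fun a ↦ hmem _ (.inl ⟨a, rfl⟩)
  let u : A' := ⟨τ 0 / τ 1, hu⟩
  let v : A' := ⟨τ 1 / τ 0, hmem _ (.inr (by simp))⟩
  have huv : u * v = 1 := Subtype.ext <| (div_mul_div_cancel₀ (hτ 1)).trans (div_self (hτ 0))
  have hut : u * φ (t 1) = φ (t 0) := Subtype.ext <| div_mul_cancel₀ _ (hτ 1)
  have hgen : Algebra.adjoin B (Set.range φ ∪ {u, v}) = ⊤ := by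
    refine Subalgebra.adjoin_eq_top_of_adjoin_image_val ?_
    convert hA'.symm using 2
    rw [Set.image_union, ← Set.range_comp, Set.image_insert_eq, Set.image_singleton]
    rfl
  let w : Fin (n + 2) → A' := Function.update (fun k ↦ φ (t k)) 0 u
  have hli : LinearIndependent A' fun k ↦ D B A' (w k) :=
    linearIndependent_D_update_div_of_isLocalization (nonZeroDivisors A) e he Fin.zero_ne_one
      (hτ 1) fun k ↦ Function.apply_update (fun _ ↦ Subtype.val) (fun k ↦ φ (t k)) 0 u k
  have hspan : span A' (Set.range fun k ↦ D B A' (w k)) = ⊤ := by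
    have hDw : (fun k ↦ D B A' (w k)) =
        Function.update (fun k ↦ D B A' (φ (t k))) 0 (D B A' u) :=
      funext (Function.apply_update (fun _ ↦ D B A') _ _ _)
    exact hDw ▸ span_range_update_D_eq_top φ ((funext he : ⇑e = _) ▸ e.span_eq)
      Fin.zero_ne_one huv hut hgen
  refine ⟨.mk hli hspan.ge, ?_, fun i hi ↦ ?_⟩ <;> rw [Module.Basis.mk_apply]
  exacts [congrArg _ (Function.update_self ..), congrArg _ (Function.update_of_ne hi ..)]

/-- Let `A` be an integral domain with `dt_1, …, dt_n` (n ≥ 2) a free basis of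
`Ω¹_{A/B}`, and let `A' = A[t_1/t_2, t_2/t_1]` inside the fraction field of `A`.
Then `Ω¹_{A'/B}` is freely generated by `d(t_1/t_2), dt_2, …, dt_n`.
(Here the indices are `0, 1, …, n+1` with `n + 2` variables, so `t 0 / t 1` plays
the role of `t_1/t_2`.) -/
theorem kaehler_differentials_of_blowup_chart
    {B A : Type*} [CommRing B] [CommRing A] [IsDomain A] [Algebra B A]
    (hinj : Function.Injective (algebraMap B A))
    {n : ℕ} (t : Fin (n + 2) → A)
    (e : Module.Basis (Fin (n + 2)) A (KaehlerDifferential B A))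
    (he : ∀ i, e i = KaehlerDifferential.D B A (t i))
    (K : Type*) [Field K] [Algebra A K] [IsFractionRing A K]
    [Algebra B K] [IsScalarTower B A K]
    (A' : Subalgebra B K)
    (hA' : A' = Algebra.adjoin B (Set.range (algebraMap A K) ∪
      {algebraMap A K (t 0) / algebraMap A K (t 1),
       algebraMap A K (t 1) / algebraMap A K (t 0)}))
    (hu : algebraMap A K (t 0) / algebraMap A K (t 1) ∈ A')
    (ht : ∀ i : Fin (n + 2), algebraMap A K (t i) ∈ A') :
    ∃ b : Module.Basis (Fin (n + 2)) A' (KaehlerDifferential B A'),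
      b 0 = KaehlerDifferential.D B A'
        (⟨algebraMap A K (t 0) / algebraMap A K (t 1), hu⟩ : A') ∧
      ∀ i : Fin (n + 2), i ≠ 0 →
        b i = KaehlerDifferential.D B A' (⟨algebraMap A K (t i), ht i⟩ : A') :=
  kaehler_differentials_of_blowup_chart_general t e he K A' hA' hu ht
end

section
/- Let N be a nilpotent n×n matrix over a complete nonarchimedean field K of residue characteristic p, with N^e = 0, and let N(t) = Σ_{i≥0} N_i t^i be a matrix of power series with N(0)·(initial coefficient) = N_0 = N, converging on |t| ≤ a with |N_i| ≤ δ a^{−i} for some δ ≥ 1. Then the unique formal power series matrix solution M = Σ M_i t^i, M_0 = I, of N(t) M + t M' = M N_0 satisfies the bound |M_i| ≤ |i!|^{−2e} a^{−i} δ^{2ei} for all i ≥ 0; in particular M converges on the disc |t| < |p|^{2e/(p−1)} a δ^{−2e}. -/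
/-!
The recursion says `(i + ad N₀) M_i = R_i` with `R_i = -∑_{j<i} N_{i-j} M_j`. As `N₀ ^ e = 0`,
`ad N₀ = L_{N₀} - R_{N₀}` is a difference of commuting nilpotents, so `(ad N₀) ^ (2e-1) = 0`
and `i + ad N₀` is inverted by a finite Neumann series. In the sup norm on matrices, which is
ultrametric and submultiplicative over `K`, each term of that series costs at most a factor
`|i|⁻¹` or `δ`, whence `‖M_i‖ ≤ |i|^{-2e} δ^{2e-1} ‖R_i‖`, and induction on `i` gives the
factorial bound. Finally `|i!| ≥ |p|^{i/(p-1)}` dominates `‖M_i‖ ‖t‖^i` by a geometric sequence.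
-/

open Filter Topology

open scoped Matrix.Norms.Elementwise

theorem norm_le_of_smul_add_eq_of_pow_eq_zero {K E : Type*} [NormedField K]
    [SeminormedAddCommGroup E] [IsUltrametricDist E] [NormedSpace K E] {F : E →ₗ[K] E} {m : ℕ}
    (hF : F ^ m = 0) {δ : ℝ} (hδ : 1 ≤ δ) (hFδ : ∀ x, ‖F x‖ ≤ δ * ‖x‖) {c : K} (hc0 : c ≠ 0)
    (hc : ‖c‖ ≤ 1) {x r : E} (h : c • x + F x = r) :
    ‖x‖ ≤ ‖c‖⁻¹ ^ m * δ ^ (m - 1) * ‖r‖ := by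
  have hc0' : 0 < ‖c‖ := norm_pos_iff.2 hc0
  have hc1 : 1 ≤ ‖c‖⁻¹ := (one_le_inv₀ hc0').2 hc
  have hFpow : ∀ s y, ‖(F ^ s) y‖ ≤ δ ^ s * ‖y‖ := by
    intro s
    induction s with
    | zero => simp
    | succ s ih =>
      intro y
      calc ‖(F ^ (s + 1)) y‖ = ‖F ((F ^ s) y)‖ := by rw [pow_succ', Module.End.mul_apply]
        _ ≤ δ * (δ ^ s * ‖y‖) := (hFδ _).trans (by gcongr; exact ih y)
        _ = δ ^ (s + 1) * ‖y‖ := by ring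
  have hstep : ∀ s, c • (F ^ s) x = (F ^ s) r - (F ^ (s + 1)) x := by
    intro s
    rw [← h, map_add, map_smul, pow_succ, Module.End.mul_apply]
    abel
  have hdesc : ∀ s ≤ m, ‖(F ^ s) x‖ ≤ ‖c‖⁻¹ ^ (m - s) * δ ^ (m - 1) * ‖r‖ := by
    intro s hs
    induction hs using Nat.decreasingInduction with
    | self => rw [hF]; simp only [LinearMap.zero_apply, norm_zero]; positivity
    | of_succ s hs ih =>
      have hr : ‖(F ^ s) r‖ ≤ ‖c‖⁻¹ ^ (m - (s + 1)) * δ ^ (m - 1) * ‖r‖ :=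
        (hFpow s r).trans <| mul_le_mul_of_nonneg_right
          ((pow_le_pow_right₀ hδ (show s ≤ m - 1 by omega)).trans
            (le_mul_of_one_le_left (by positivity) (one_le_pow₀ hc1))) (norm_nonneg r)
      have hmax : ‖c‖ * ‖(F ^ s) x‖ ≤ ‖c‖⁻¹ ^ (m - (s + 1)) * δ ^ (m - 1) * ‖r‖ := by
        rw [← norm_smul, hstep, sub_eq_add_neg]
        exact (IsUltrametricDist.norm_add_le_max _ _).trans
          (max_le hr (by rw [norm_neg]; exact ih))
      rw [show m - s = m - (s + 1) + 1 by omega, pow_succ', mul_assoc, mul_assoc,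
        le_inv_mul_iff₀ hc0', ← mul_assoc]
      exact hmax
  simpa using hdesc 0 (Nat.zero_le m)

theorem LinearMap.mulLeft_sub_mulRight_pow_eq_zero {R A : Type*} [CommRing R] [Ring A]
    [Algebra R A] {a : A} {e : ℕ} (h : a ^ e = 0) :
    (LinearMap.mulLeft R a - LinearMap.mulRight R a) ^ (2 * e - 1) = 0 := by
  rw [sub_eq_add_neg, two_mul]
  refine (commute_mulLeft_right (R := R) a a).neg_right.add_pow_add_eq_zero_of_pow_eq_zero ?_ ?_
  · rw [pow_mulLeft, h, mulLeft_zero_eq_zero]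
  · rw [neg_pow, pow_mulRight, h, mulRight_zero_eq_zero, mul_zero]

namespace Matrix

variable {α : Type*} [NormedRing α] [IsUltrametricDist α] {l m n : Type*} [Fintype l]
  [Fintype m] [Fintype n]

instance isUltrametricDist : IsUltrametricDist (Matrix m n α) := Pi.instIsUltrametricDist

theorem norm_mul_le_of_isUltrametricDist (A : Matrix l m α) (B : Matrix m n α) :
    ‖A * B‖ ≤ ‖A‖ * ‖B‖ := by
  refine (norm_le_iff (by positivity)).2 fun i k => ?_
  refine IsUltrametricDist.norm_sum_le_of_forall_le_of_nonneg (by positivity) fun j _ => ?_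
  exact (norm_mul_le _ _).trans (mul_le_mul (norm_entry_le_entrywise_sup_norm A)
    (norm_entry_le_entrywise_sup_norm B) (norm_nonneg _) (norm_nonneg _))

theorem norm_mul_sub_mul_le_of_isUltrametricDist (A B : Matrix n n α) :
    ‖A * B - B * A‖ ≤ ‖A‖ * ‖B‖ := by
  rw [sub_eq_add_neg]
  refine (IsUltrametricDist.norm_add_le_max _ _).trans (max_le ?_ ?_)
  · exact norm_mul_le_of_isUltrametricDist A B
  · rw [norm_neg, mul_comm ‖A‖]
    exact norm_mul_le_of_isUltrametricDist B A

end Matrix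

theorem antitone_norm_factorial {R : Type*} [SeminormedRing R]
    (hint : ∀ m : ℕ, ‖(m : R)‖ ≤ 1) : Antitone fun i : ℕ => ‖(i.factorial : R)‖ := by
  refine antitone_nat_of_succ_le fun i => ?_
  rw [Nat.factorial_succ, Nat.cast_mul]
  exact (norm_mul_le _ _).trans (mul_le_of_le_one_left (norm_nonneg _) (hint _))

section FundamentalSolution

variable {K : Type*} [NormedField K] [IsUltrametricDist K] [CharZero K] {ι : Type*} [Fintype ι]
  {N M : ℕ → Matrix ι ι K} {e : ℕ} {a δ : ℝ}

theorem norm_sum_mul_le_of_forall_norm_le (hint : ∀ m : ℕ, ‖(m : K)‖ ≤ 1) (ha : 0 < a)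
    (hδ : 1 ≤ δ) (hN : ∀ i, ‖N i‖ ≤ δ / a ^ i) {m : ℕ}
    (hM : ∀ j ≤ m, ‖M j‖ ≤ ‖(j.factorial : K)‖⁻¹ ^ (2 * e) * δ ^ (2 * e * j) / a ^ j) :
    ‖∑ j ∈ Finset.range (m + 1), N (m + 1 - j) * M j‖ ≤
      ‖(m.factorial : K)‖⁻¹ ^ (2 * e) * δ ^ (2 * e * m + 1) / a ^ (m + 1) := by
  refine IsUltrametricDist.norm_sum_le_of_forall_le_of_nonneg (by positivity) fun j hj => ?_
  have hjm : j ≤ m := Nat.lt_succ_iff.1 (Finset.mem_range.1 hj)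
  have hfac : ‖(j.factorial : K)‖⁻¹ ≤ ‖(m.factorial : K)‖⁻¹ :=
    inv_anti₀ (norm_pos_iff.2 (Nat.cast_ne_zero.2 m.factorial_ne_zero))
      (antitone_norm_factorial hint hjm)
  calc ‖N (m + 1 - j) * M j‖ ≤ ‖N (m + 1 - j)‖ * ‖M j‖ :=
        Matrix.norm_mul_le_of_isUltrametricDist _ _
    _ ≤ δ / a ^ (m + 1 - j) * (‖(j.factorial : K)‖⁻¹ ^ (2 * e) * δ ^ (2 * e * j) / a ^ j) :=
        mul_le_mul (hN _) (hM j hjm) (norm_nonneg _) (by positivity)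
    _ = ‖(j.factorial : K)‖⁻¹ ^ (2 * e) * δ ^ (2 * e * j + 1) / a ^ (m + 1) := by
        rw [div_mul_div_comm, ← pow_add, Nat.sub_add_cancel (by omega), pow_succ]
        ring
    _ ≤ ‖(m.factorial : K)‖⁻¹ ^ (2 * e) * δ ^ (2 * e * m + 1) / a ^ (m + 1) := by
        gcongr

theorem norm_coeff_le_of_recursion [DecidableEq ι] (hint : ∀ m : ℕ, ‖(m : K)‖ ≤ 1) (he : 1 ≤ e)
    (hNnil : N 0 ^ e = 0) (ha : 0 < a) (hδ : 1 ≤ δ) (hN : ∀ i, ‖N i‖ ≤ δ / a ^ i)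
    (hM0 : ‖M 0‖ ≤ 1)
    (hrec : ∀ i : ℕ, 0 < i →
      (i : K) • M i + N 0 * M i - M i * N 0 = -∑ j ∈ Finset.range i, N (i - j) * M j)
    (i : ℕ) : ‖M i‖ ≤ ‖(i.factorial : K)‖⁻¹ ^ (2 * e) * δ ^ (2 * e * i) / a ^ i := by
  induction i using Nat.strong_induction_on with
  | _ i ih =>
  cases i with
  | zero => simpa using hM0
  | succ m =>
    set F := LinearMap.mulLeft K (N 0) - LinearMap.mulRight K (N 0)
    -- `2 * e` rather than the sharp `2 * e - 1` makes the exponents of `δ` add up exactly.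
    have hF : F ^ (2 * e) = 0 :=
      pow_eq_zero_of_le (Nat.sub_le _ _) (LinearMap.mulLeft_sub_mulRight_pow_eq_zero hNnil)
    have hFδ : ∀ X, ‖F X‖ ≤ δ * ‖X‖ := fun X =>
      (Matrix.norm_mul_sub_mul_le_of_isUltrametricDist _ _).trans
        (mul_le_mul_of_nonneg_right (by simpa using hN 0) (norm_nonneg X))
    have heq : ((m + 1 : ℕ) : K) • M (m + 1) + F (M (m + 1)) =
        -∑ j ∈ Finset.range (m + 1), N (m + 1 - j) * M j := by
      rw [← hrec (m + 1) m.succ_pos, add_sub_assoc]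
      rfl
    calc ‖M (m + 1)‖
        ≤ ‖((m + 1 : ℕ) : K)‖⁻¹ ^ (2 * e) * δ ^ (2 * e - 1) *
            ‖-∑ j ∈ Finset.range (m + 1), N (m + 1 - j) * M j‖ :=
          norm_le_of_smul_add_eq_of_pow_eq_zero hF hδ hFδ (Nat.cast_ne_zero.2 m.succ_ne_zero)
            (hint _) heq
      _ ≤ ‖((m + 1 : ℕ) : K)‖⁻¹ ^ (2 * e) * δ ^ (2 * e - 1) *
            (‖(m.factorial : K)‖⁻¹ ^ (2 * e) * δ ^ (2 * e * m + 1) / a ^ (m + 1)) := by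
          rw [norm_neg]
          gcongr
          exact norm_sum_mul_le_of_forall_norm_le hint ha hδ hN fun j hj => ih j (by omega)
      _ = ‖((m + 1).factorial : K)‖⁻¹ ^ (2 * e) * δ ^ (2 * e * (m + 1)) / a ^ (m + 1) := by
          rw [Nat.factorial_succ, Nat.cast_mul, norm_mul, mul_inv, mul_pow,
            show 2 * e * (m + 1) = 2 * e - 1 + (2 * e * m + 1) by rw [Nat.mul_succ]; omega,
            pow_add]
          ring

end FundamentalSolution

theorem tendsto_inv_pow_mul_pow_of_lt {f : ℕ → ℝ} {c x : ℝ} (hc : 0 < c) (hf : ∀ i, c ^ i ≤ f i)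
    (k : ℕ) (hx0 : 0 ≤ x) (hx : x < c ^ k) :
    Tendsto (fun i => (f i)⁻¹ ^ k * x ^ i) atTop (𝓝 0) := by
  have hf0 : ∀ i, 0 < f i := fun i => (pow_pos hc i).trans_le (hf i)
  refine squeeze_zero (fun i => by have := hf0 i; positivity) (fun i => ?_)
    (tendsto_pow_atTop_nhds_zero_of_lt_one (by positivity) ((div_lt_one (by positivity)).2 hx))
  have := hf0 i
  calc (f i)⁻¹ ^ k * x ^ i ≤ (c ^ i)⁻¹ ^ k * x ^ i := by gcongr; exact hf i
    _ = (x / c ^ k) ^ i := by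
        rw [div_pow, inv_pow, ← pow_mul, ← pow_mul, mul_comm i k, div_eq_mul_inv, mul_comm]

theorem fundamental_solution_bound_general
    {K : Type*} [NormedField K] [CharZero K]
    (hna : ∀ x y : K, ‖x + y‖ ≤ max ‖x‖ ‖y‖)
    (p : ℕ) (hp : p.Prime)
    (hint : ∀ m : ℕ, ‖(m : K)‖ ≤ 1)
    (hfact : ∀ i : ℕ, ‖(p : K)‖ ^ ((i : ℝ) / ((p : ℝ) - 1)) ≤ ‖((i.factorial : ℕ) : K)‖)
    {n : ℕ} (N : ℕ → Matrix (Fin n) (Fin n) K)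
    (e : ℕ) (he : 1 ≤ e) (hNnil : N 0 ^ e = 0)
    (a δ : ℝ) (ha : 0 < a) (hδ : 1 ≤ δ)
    (hNbound : ∀ (i : ℕ) (k l : Fin n), ‖N i k l‖ ≤ δ / a ^ i)
    (M : ℕ → Matrix (Fin n) (Fin n) K)
    (hM0 : M 0 = 1)
    (hrec : ∀ i : ℕ, 0 < i →
      (i : K) • M i + N 0 * M i - M i * N 0 = -∑ j ∈ Finset.range i, N (i - j) * M j) :
    (∀ (i : ℕ) (k l : Fin n),
        ‖M i k l‖ ≤ ‖((i.factorial : ℕ) : K)‖⁻¹ ^ (2 * e) * δ ^ (2 * e * i) / a ^ i) ∧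
    (∀ t : K, ‖t‖ < ‖(p : K)‖ ^ ((2 * (e : ℝ)) / ((p : ℝ) - 1)) * a / δ ^ (2 * e) →
      ∀ k l : Fin n,
        Tendsto (fun i : ℕ => ‖M i k l‖ * ‖t‖ ^ i) atTop (nhds 0)) := by
  have := IsUltrametricDist.isUltrametricDist_of_forall_norm_add_le_max_norm hna
  have hM0' : ‖M 0‖ ≤ 1 := (Matrix.norm_le_iff zero_le_one).2 fun k l => by
    rw [hM0, Matrix.one_apply]
    split_ifs <;> simp
  have hbound : ∀ (i : ℕ) (k l : Fin n),
      ‖M i k l‖ ≤ ‖((i.factorial : ℕ) : K)‖⁻¹ ^ (2 * e) * δ ^ (2 * e * i) / a ^ i :=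
    fun i k l => (Matrix.norm_entry_le_entrywise_sup_norm _).trans <|
      norm_coeff_le_of_recursion hint he hNnil ha hδ
        (fun i => (Matrix.norm_le_iff (by positivity)).2 (hNbound i)) hM0' hrec i
  refine ⟨hbound, fun t ht k l => ?_⟩
  have hp0 : 0 < ‖(p : K)‖ := norm_pos_iff.2 (Nat.cast_ne_zero.2 hp.ne_zero)
  set c := ‖(p : K)‖ ^ (1 / ((p : ℝ) - 1))
  have hcpow : ∀ i : ℕ, c ^ i = ‖(p : K)‖ ^ ((i : ℝ) / ((p : ℝ) - 1)) := fun i => by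
    rw [← Real.rpow_natCast, ← Real.rpow_mul hp0.le, one_div_mul_eq_div]
  have hx : δ ^ (2 * e) * ‖t‖ / a < c ^ (2 * e) := by
    rw [hcpow, Nat.cast_mul, Nat.cast_two, div_lt_iff₀ ha]
    rw [lt_div_iff₀ (by positivity)] at ht
    linarith
  refine squeeze_zero (fun i => by positivity) (fun i => ?_)
    (tendsto_inv_pow_mul_pow_of_lt (Real.rpow_pos_of_pos hp0 _)
      (fun i => (hcpow i).trans_le (hfact i)) (2 * e) (by positivity) hx)
  calc ‖M i k l‖ * ‖t‖ ^ i
      ≤ ‖((i.factorial : ℕ) : K)‖⁻¹ ^ (2 * e) * δ ^ (2 * e * i) / a ^ i * ‖t‖ ^ i := by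
        gcongr
        exact hbound i k l
    _ = _ := by rw [div_pow, mul_pow, pow_mul]; ring

/-- Bound on the fundamental solution matrix: if `N(t) = Σ N_i t^i` has `N_0`
nilpotent with `N_0^e = 0` and `‖N_i‖ ≤ δ/a^i`, then the unique formal solution
`M = Σ M_i t^i`, `M_0 = I`, of `N(t)M + tM' = M N_0` (equivalently, the recursion
`i M_i + N_0 M_i − M_i N_0 = −Σ_{j<i} N_{i−j} M_j`) satisfies
`‖M_i‖ ≤ |i!|^{−2e} δ^{2ei} / a^i`; in particular `M` converges on the disc
`|t| < |p|^{2e/(p−1)} · a · δ^{−2e}`. -/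
theorem fundamental_solution_bound
    {K : Type*} [NormedField K] [CharZero K]
    (hna : ∀ x y : K, ‖x + y‖ ≤ max ‖x‖ ‖y‖)
    (p : ℕ) (hp : p.Prime) (hpnorm : ‖(p : K)‖ < 1)
    (hint : ∀ m : ℕ, ‖(m : K)‖ ≤ 1)
    (hfact : ∀ i : ℕ, ‖(p : K)‖ ^ ((i : ℝ) / ((p : ℝ) - 1)) ≤ ‖((i.factorial : ℕ) : K)‖)
    {n : ℕ} (N : ℕ → Matrix (Fin n) (Fin n) K)
    (e : ℕ) (he : 1 ≤ e) (hNnil : N 0 ^ e = 0)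
    (a δ : ℝ) (ha : 0 < a) (hδ : 1 ≤ δ)
    (hNbound : ∀ (i : ℕ) (k l : Fin n), ‖N i k l‖ ≤ δ / a ^ i)
    (M : ℕ → Matrix (Fin n) (Fin n) K)
    (hM0 : M 0 = 1)
    (hrec : ∀ i : ℕ, 0 < i →
      (i : K) • M i + N 0 * M i - M i * N 0 = -∑ j ∈ Finset.range i, N (i - j) * M j) :
    (∀ (i : ℕ) (k l : Fin n),
        ‖M i k l‖ ≤ ‖((i.factorial : ℕ) : K)‖⁻¹ ^ (2 * e) * δ ^ (2 * e * i) / a ^ i) ∧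
    (∀ t : K, ‖t‖ < ‖(p : K)‖ ^ ((2 * (e : ℝ)) / ((p : ℝ) - 1)) * a / δ ^ (2 * e) →
      ∀ k l : Fin n,
        Tendsto (fun i : ℕ => ‖M i k l‖ * ‖t‖ ^ i) atTop (nhds 0)) :=
  fundamental_solution_bound_general hna p hp hint hfact N e he hNnil a δ ha hδ hNbound M hM0 hrec
end

section
/- Let A be a noetherian ring, complete with respect to the x-adic topology for some x ∈ A that is not a zero divisor, and let R be a subring of A. If B = A/xA is formally smooth over R, then there is an R-algebra isomorphism A ≅ B⟦x⟧ sending x to x, whose composition with the reduction B⟦x⟧ → B equals the quotient map A → A/xA ≅ B. -/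
open Filter PowerSeries

universe u

/-!
Since `A` is `x`-adically complete, formal smoothness lifts the identity of `A ⧸ (x)` to an
`R`-algebra section `σ` of the quotient map. Evaluating power series at `x` after applying `σ` to
the coefficients converges `x`-adically and gives `ψ : (A ⧸ (x))⟦X⟧ → A`. It is surjective because
every `a : A` has an `x`-adic expansion `∑ σ(dᵢ) xⁱ` (subtract `σ (a mod x)` and divide by `x`), and
injective because a series in the kernel has constant term zero, and, `x` being a nonzerodivisor,
its quotient by `X` again lies in the kernel.
-/

theorem exists_sub_sum_mul_pow_mem_span_pow {A : Type*} [CommRing A] (x : A)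
    (σ : A ⧸ Ideal.span {x} → A) (hσ : ∀ b, Ideal.Quotient.mk _ (σ b) = b) (a : A) :
    ∃ d : ℕ → A ⧸ Ideal.span {x},
      ∀ n, a - ∑ i ∈ Finset.range n, σ (d i) * x ^ i ∈ Ideal.span {x} ^ n := by
  have hdiv : ∀ c : A, x ∣ c - σ (Ideal.Quotient.mk _ c) := fun c => by
    rw [← Ideal.mem_span_singleton, ← Ideal.Quotient.eq_zero_iff_mem, map_sub, hσ, sub_self]
  choose q hq using hdiv
  let r : ℕ → A := fun n => q^[n] a
  have hrem : ∀ n, a - ∑ i ∈ Finset.range n, σ (Ideal.Quotient.mk _ (r i)) * x ^ i = x ^ n * r n := by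
    intro n
    induction n with
    | zero => simp [r]
    | succ n ih =>
      rw [Finset.sum_range_succ, ← sub_sub, ih, show r (n + 1) = q (r n) from
        Function.iterate_succ_apply' q n a, pow_succ, mul_assoc, ← hq]
      ring
  refine ⟨fun i => Ideal.Quotient.mk _ (r i), fun n => ?_⟩
  rw [hrem, Ideal.span_singleton_pow]
  exact Ideal.mul_mem_right _ _ (Ideal.mem_span_singleton_self _)

namespace PowerSeries

variable {A B : Type*} [CommRing A] [CommRing B]

theorem exists_eval₂_of_isAdicComplete (I : Ideal A) [IsAdicComplete I A] (σ : B →+* A)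
    {a : A} (ha : a ∈ I) :
    ∃ ψ : B⟦X⟧ →+* A, ψ X = a ∧ (∀ b, ψ (C b) = σ b) ∧
      ∀ f n, ψ f - ∑ i ∈ Finset.range n, σ (coeff i f) * a ^ i ∈ I ^ n := by
  let _ : WithIdeal A := ⟨I⟩
  -- the adic topology of `⊥` is the discrete one
  let _ : WithIdeal B := ⟨⊥⟩
  obtain ⟨_, _⟩ : CompleteSpace A ∧ T2Space A := (IsAdic.isAdicComplete_iff (I := I) rfl).mp ‹_›
  have hσ : Continuous σ := (WithIdeal.uniformContinuous_of_map_le (R := B) (S := A) (f := σ)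
    (show (⊥ : Ideal B).map σ ≤ I from Ideal.map_bot.trans_le bot_le)).continuous
  have hpow : ∀ {n m}, n ≤ m → a ^ m ∈ I ^ n := fun h =>
    Ideal.pow_le_pow_right h (Ideal.pow_mem_pow ha _)
  have hnil : HasEval a := (I.hasBasis_nhds_zero_adic).tendsto_right_iff.mpr fun n _ =>
    eventually_atTop.mpr ⟨n, fun m hm => hpow hm⟩
  refine ⟨eval₂Hom hσ hnil, by simp [coe_eval₂Hom], by simp [coe_eval₂Hom], fun f n => ?_⟩
  obtain ⟨N, hN, hnN⟩ := (((I.hasBasis_nhds_adic _).tendsto_right_iff.mp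
    (hasSum_eval₂ hσ hnil f).tendsto_sum_nat n trivial).and (eventually_ge_atTop n)).exists
  obtain ⟨y, hy, hyN⟩ := hN
  have htail : ∑ i ∈ Finset.Ico n N, σ (coeff i f) * a ^ i ∈ I ^ n :=
    Ideal.sum_mem _ fun i hi => Ideal.mul_mem_left _ _ (hpow (Finset.mem_Ico.mp hi).1)
  rw [Finset.sum_Ico_eq_sub _ hnN, ← hyN] at htail
  rw [coe_eval₂Hom]
  convert sub_mem htail hy using 1
  ring

theorem injective_of_map_X_mem_nonZeroDivisors (ψ : B⟦X⟧ →+* A) (hX : ψ X ∈ nonZeroDivisors A)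
    (h0 : ∀ f, ψ f = 0 → constantCoeff f = 0) : Function.Injective ψ := by
  suffices h : ∀ n f, ψ f = 0 → coeff n f = 0 from
    (injective_iff_map_eq_zero ψ).mpr fun f hf => ext fun n => h n f hf
  intro n
  induction n with
  | zero => simpa using h0
  | succ n ih =>
    intro f hf
    obtain ⟨g, rfl⟩ := X_dvd_iff.mpr (h0 f hf)
    rw [map_mul] at hf
    rw [coeff_succ_X_mul]
    exact ih g (mem_nonZeroDivisors_iff_right.mp hX _ (by rwa [mul_comm] at hf))

theorem surjective_of_forall_sub_sum_mem_span_pow (x : A)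
    [IsHausdorff (Ideal.span {x}) A] (σ : A ⧸ Ideal.span {x} → A)
    (hσ : ∀ b, Ideal.Quotient.mk _ (σ b) = b) (ψ : (A ⧸ Ideal.span {x})⟦X⟧ → A)
    (hψ : ∀ f n, ψ f - ∑ i ∈ Finset.range n, σ (coeff i f) * x ^ i ∈ Ideal.span {x} ^ n) :
    Function.Surjective ψ := by
  intro a
  obtain ⟨d, hd⟩ := exists_sub_sum_mul_pow_mem_span_pow x σ hσ a
  refine ⟨PowerSeries.mk d, (IsHausdorff.eq_iff_smodEq (I := Ideal.span {x})).mpr fun n => ?_⟩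
  rw [SModEq.sub_mem, smul_eq_mul, Ideal.mul_top]
  convert sub_mem (hψ (PowerSeries.mk d) n) (hd n) using 1
  simp

end PowerSeries

theorem cohen_structure_power_series_general
    {R A : Type u} [CommRing R] [CommRing A] [Algebra R A]
    (x : A) (hx : x ∈ nonZeroDivisors A)
    [IsAdicComplete (Ideal.span {x}) A]
    [Algebra.FormallySmooth R (A ⧸ Ideal.span {x})] :
    ∃ e : A ≃ₐ[R] PowerSeries (A ⧸ Ideal.span {x}),
      e x = PowerSeries.X ∧
      ∀ a : A, PowerSeries.constantCoeff (e a) =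
        Ideal.Quotient.mk (Ideal.span {x}) a := by
  set I := Ideal.span {x}
  obtain ⟨σ, hσ⟩ :=
    Algebra.FormallySmooth.exists_mkₐ_comp_eq_of_isAdicComplete (AlgHom.id R (A ⧸ I))
  replace hσ : ∀ b, Ideal.Quotient.mk I (σ b) = b := fun b => congr($hσ b)
  obtain ⟨ψ, hψX, hψC, hψ⟩ :=
    exists_eval₂_of_isAdicComplete I (σ : A ⧸ I →+* A) (Ideal.mem_span_singleton_self x)
  have hconst : ∀ f, Ideal.Quotient.mk I (ψ f) = PowerSeries.constantCoeff f := fun f => by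
    rw [← hσ (PowerSeries.constantCoeff f), Ideal.Quotient.eq]
    simpa using hψ f 1
  let Ψ : PowerSeries (A ⧸ I) →ₐ[R] A :=
    { ψ with
      commutes' := fun r => by simpa [PowerSeries.algebraMap_apply] using hψC (algebraMap R _ r) }
  have hbij : Function.Bijective Ψ :=
    ⟨injective_of_map_X_mem_nonZeroDivisors ψ (hψX ▸ hx)
      fun f hf => by rw [← hconst, hf, map_zero],
    surjective_of_forall_sub_sum_mem_span_pow x σ hσ ψ hψ⟩
  refine ⟨(AlgEquiv.ofBijective Ψ hbij).symm, ?_, fun a => ?_⟩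
  · rw [AlgEquiv.symm_apply_eq]
    exact hψX.symm
  · rw [← hconst]
    exact congrArg _ ((AlgEquiv.ofBijective Ψ hbij).apply_symm_apply a)

/-- Cohen-type structure lemma: `A` noetherian, `x`-adically complete for a
nonzerodivisor `x`, `R` a subring of `A` (an injective algebra), and `B = A/xA`
formally smooth over `R`. Then there is an `R`-algebra isomorphism `A ≅ B⟦x⟧`
sending `x` to `x`, whose composition with the reduction `B⟦x⟧ → B` is the
quotient map `A → A/xA = B`. -/
theorem cohen_structure_power_series
    {R A : Type u} [CommRing R] [CommRing A] [IsNoetherianRing A] [Algebra R A]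
    (hinj : Function.Injective (algebraMap R A))
    (x : A) (hx : x ∈ nonZeroDivisors A)
    [IsAdicComplete (Ideal.span {x}) A]
    [Algebra.FormallySmooth R (A ⧸ Ideal.span {x})] :
    ∃ e : A ≃ₐ[R] PowerSeries (A ⧸ Ideal.span {x}),
      e x = PowerSeries.X ∧
      ∀ a : A, PowerSeries.constantCoeff (e a) =
        Ideal.Quotient.mk (Ideal.span {x}) a :=
  cohen_structure_power_series_general x hx
end
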